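/- arXiv:1010.1420 — 3 statements merged into one kernel-verified Lean document; each statement's English description precedes it below -/
import Mathlib

section
/- For all nonnegative integers n, the sequence q_n = \sum_{k=0}^n \binom{n}{k}^2 k! satisfies the second-order homogeneous linear recurrence q_{n+2} - 2(n+2) q_{n+1} + (n+1)^2 q_n = 0. -/
/-! Reflecting `k ↦ n - k` and using `C(n,k) k! = n! / (n-k)!` gives `q n = n! L_n(-1)` for the
Laguerre polynomial `L_n`, so the claim is the Laguerre three-term recurrence at `x = -1`. That
recurrence follows from two first-order relations between `L_n` and the associated Laguerre
polynomial `L_n^{(1)}`: `(n+1)(L_{n+1} - L_n) = -x L_n^{(1)}` (absorption) and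
`L_{n+1}^{(1)} - L_n^{(1)} = L_{n+1}` (Pascal). -/

open Finset

noncomputable def q (n : ℕ) : ℚ :=
  ∑ k ∈ Finset.range (n + 1), ((n.choose k : ℚ))^2 * (Nat.factorial k : ℚ)

open scoped Nat

section Laguerre

variable {K : Type*} [Field K] [CharZero K]

def laguerre (x : K) (n : ℕ) : K :=
  ∑ j ∈ range (n + 1), (n.choose j : K) * (-x) ^ j / j !

/-- The associated Laguerre polynomial `L_n^{(1)}(x) = ∑ C(n+1, n-j) (-x)^j / j!`. -/
def assocLaguerre (x : K) (n : ℕ) : K :=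
  ∑ j ∈ range (n + 1), ((n + 1).choose (j + 1) : K) * (-x) ^ j / j !

lemma laguerre_eq_sum_range_add_two (x : K) (n : ℕ) :
    laguerre x n = ∑ j ∈ range (n + 2), (n.choose j : K) * (-x) ^ j / j ! := by
  rw [sum_range_succ, Nat.choose_eq_zero_of_lt n.lt_succ_self]
  simp [laguerre]

lemma assocLaguerre_eq_sum_range_add_two (x : K) (n : ℕ) :
    assocLaguerre x n =
      ∑ j ∈ range (n + 2), ((n + 1).choose (j + 1) : K) * (-x) ^ j / j ! := by
  rw [sum_range_succ, Nat.choose_eq_zero_of_lt (n + 1).lt_succ_self]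
  simp [assocLaguerre]

lemma succ_mul_laguerre_succ_sub (x : K) (n : ℕ) :
    (n + 1) * (laguerre x (n + 1) - laguerre x n) = -x * assocLaguerre x n := by
  rw [laguerre, laguerre_eq_sum_range_add_two, ← sum_sub_distrib, sum_range_succ', assocLaguerre]
  simp only [Nat.choose_zero_right, sub_self, add_zero, mul_sum]
  refine sum_congr rfl fun j _ => ?_
  have pascal : ((n + 1).choose (j + 1) : K) = n.choose j + n.choose (j + 1) := by
    exact_mod_cast Nat.choose_succ_succ' n j
  have absorb : ((n : K) + 1) * n.choose j = (n + 1).choose (j + 1) * (j + 1) := by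
    exact_mod_cast Nat.add_one_mul_choose_eq n j
  rw [Nat.factorial_succ]
  push_cast
  have hj : (j ! : K) ≠ 0 := Nat.cast_ne_zero.mpr j.factorial_ne_zero
  field_simp
  linear_combination (-x) ^ (j + 1) * ((n + 1) * pascal + absorb)

lemma assocLaguerre_succ_sub (x : K) (n : ℕ) :
    assocLaguerre x (n + 1) - assocLaguerre x n = laguerre x (n + 1) := by
  rw [assocLaguerre, assocLaguerre_eq_sum_range_add_two, laguerre, ← sum_sub_distrib]
  refine sum_congr rfl fun j _ => ?_
  rw [Nat.choose_succ_succ' (n + 1) j]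
  push_cast
  ring

theorem laguerre_recurrence (x : K) (n : ℕ) :
    (n + 2) * laguerre x (n + 2) =
      (2 * n + 3 - x) * laguerre x (n + 1) - (n + 1) * laguerre x n := by
  have h₀ := succ_mul_laguerre_succ_sub x n
  have h₁ := succ_mul_laguerre_succ_sub x (n + 1)
  have h := assocLaguerre_succ_sub x n
  push_cast at h₁
  linear_combination h₁ - h₀ - x * h

end Laguerre

lemma q_eq_factorial_mul_laguerre (n : ℕ) : q n = n ! * laguerre (-1 : ℚ) n := by
  rw [q, laguerre, mul_sum, ← sum_range_reflect]
  refine sum_congr rfl fun k hk => ?_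
  have hkn : k ≤ n := mem_range_succ_iff.mp hk
  have h : (n.choose k : ℚ) * k ! * (n - k)! = n ! := by
    exact_mod_cast Nat.choose_mul_factorial_mul_factorial hkn
  rw [add_tsub_cancel_right, Nat.choose_symm hkn]
  field_simp
  linear_combination (n.choose k : ℚ) * h

theorem q_recurrence (n : ℕ) :
    q (n + 2) - 2 * ((n : ℚ) + 2) * q (n + 1) + ((n : ℚ) + 1)^2 * q n = 0 := by
  have h := laguerre_recurrence (-1 : ℚ) n
  simp only [q_eq_factorial_mul_laguerre, Nat.factorial_succ]
  push_cast
  linear_combination (n + 1) * (n ! : ℚ) * h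
end

section
/- For every nonnegative integer n, D_n \cdot p_n is an integer, where p_n = \sum_{k=0}^n \binom{n}{k}^2 k! (2 H_{n-k} - H_k) and D_n is the least common multiple of 1, 2, ..., n (with D_0 = 1). -/
open Finset

noncomputable def H (m : ℕ) : ℚ := ∑ j ∈ Finset.range m, (1 : ℚ) / (j + 1)

noncomputable def p (n : ℕ) : ℚ :=
  ∑ k ∈ Finset.range (n + 1),
    ((n.choose k : ℚ))^2 * (Nat.factorial k : ℚ) * (2 * H (n - k) - H k)

/-- `D n` is the least common multiple of `1, 2, ..., n` (with `D 0 = 1`). -/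
def D (n : ℕ) : ℕ := (Finset.Icc 1 n).lcm id

/-! Every summand of `p n` is an integer multiple of `H m` for some `m ≤ n`, and `D n`
clears the denominators `1, …, m` of `H m`. -/

lemma dvd_D {j n : ℕ} (hj : 1 ≤ j) (hjn : j ≤ n) : j ∣ D n :=
  Finset.dvd_lcm (f := id) (mem_Icc.mpr ⟨hj, hjn⟩)

lemma D_mul_H_mem_bot {m n : ℕ} (hmn : m ≤ n) : (D n : ℚ) * H m ∈ (⊥ : Subring ℚ) := by
  rw [H, mul_sum]
  refine sum_mem fun j hj => Subring.mem_bot.mpr ⟨(D n / (j + 1) : ℕ), ?_⟩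
  have hdvd : j + 1 ∣ D n := dvd_D (Nat.succ_pos j) (by have := mem_range.mp hj; omega)
  rw [Int.cast_natCast, Nat.cast_div hdvd (by positivity), mul_one_div, Nat.cast_succ]

theorem D_mul_p_integer (n : ℕ) : ∃ z : ℤ, (D n : ℚ) * p n = (z : ℚ) := by
  suffices h : (D n : ℚ) * p n ∈ (⊥ : Subring ℚ) by
    obtain ⟨z, hz⟩ := Subring.mem_bot.mp h
    exact ⟨z, hz.symm⟩
  rw [p, mul_sum]
  refine sum_mem fun k hk => ?_
  have hkn : k ≤ n := Nat.lt_succ_iff.mp (mem_range.mp hk)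
  rw [mul_left_comm, mul_sub, mul_left_comm _ 2]
  exact mul_mem (mul_mem (pow_mem (natCast_mem _ _) 2) (natCast_mem _ _))
    (sub_mem (mul_mem (ofNat_mem _ 2) (D_mul_H_mem_bot (n.sub_le k))) (D_mul_H_mem_bot hkn))
end

section
/- For every integer n \ge 1, n \cdot \mathfrak{d}_n is an integer, and if n is even, then n \cdot \mathfrak{d}_n / 2 is an integer, where \mathfrak{d}_n = p_{n-1} q_n - p_n q_{n-1} with q_n = \sum_{k=0}^n \binom{n}{k}^2 k! and p_n = \sum_{k=0}^n \binom{n}{k}^2 k! (2 H_{n-k} - H_k). -/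
open Finset

/-- `dd n = p_{n-1} q_n - p_n q_{n-1}`, with the conventions `p_{-1} = 1`, `q_{-1} = 0`,
so `dd 0 = 1`. -/
noncomputable def dd : ℕ → ℚ
  | 0 => 1
  | (n + 1) => p n * q (n + 1) - p (n + 1) * q n

/-! Creative telescoping in `k` gives `q (m+2) = 2(m+2) q (m+1) - (m+1)² q m` and the same
recurrence for `p` with the extra term `-m/(m+2)`. Hence
`(m+2) dd (m+2) = (m+2)(m+1) · ((m+1) dd (m+1)) + m q (m+1)`, so `n dd n ∈ ℤ` by induction
from `dd 1 = -1`, `q` being integral; if `n = m + 2` is even, so is `m`, and both terms on the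
right are divisible by `2`. -/

open scoped Nat

theorem H_succ (m : ℕ) : H (m + 1) = H m + 1 / ((m : ℚ) + 1) := by
  simp [H, Finset.sum_range_succ]

noncomputable def binomTerm (n k : ℕ) : ℚ := (n.choose k : ℚ) ^ 2 * k !

noncomputable def harmonicTerm (n k : ℕ) : ℚ := binomTerm n k * H (n - k)

theorem binomTerm_eq_zero_of_lt {n k : ℕ} (h : n < k) : binomTerm n k = 0 := by
  simp [binomTerm, Nat.choose_eq_zero_of_lt h]

@[simp]
theorem binomTerm_zero_right (n : ℕ) : binomTerm n 0 = 1 := by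
  simp [binomTerm]

theorem binomTerm_eq_binomTerm_succ (n k : ℕ) :
    binomTerm n k = (((n : ℚ) + 1 - k) / ((n : ℚ) + 1)) ^ 2 * binomTerm (n + 1) k := by
  rcases le_or_gt k (n + 1) with hk | hk
  · have h := congrArg (fun x : ℕ => ((x : ℚ) ^ 2 * k !)) (Nat.choose_mul_succ_eq n k)
    simp only [Nat.cast_mul, Nat.cast_sub hk] at h
    push_cast at h
    unfold binomTerm
    rw [div_pow, div_mul_eq_mul_div, eq_div_iff (by positivity)]
    linear_combination h
  · simp [binomTerm_eq_zero_of_lt hk, binomTerm_eq_zero_of_lt (Nat.lt_of_succ_lt hk)]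

theorem binomTerm_succ_succ (n k : ℕ) :
    binomTerm (n + 1) (k + 1) = ((n : ℚ) + 1) ^ 2 / ((k : ℚ) + 1) * binomTerm n k := by
  have h := congrArg (fun x : ℕ => ((x : ℚ) ^ 2 * k !)) (Nat.add_one_mul_choose_eq n k)
  push_cast at h
  unfold binomTerm
  rw [Nat.factorial_succ]
  push_cast
  rw [div_mul_eq_mul_div, eq_div_iff (by positivity)]
  linear_combination -h

theorem harmonicTerm_succ_succ (n k : ℕ) :
    harmonicTerm (n + 1) (k + 1) = ((n : ℚ) + 1) ^ 2 / ((k : ℚ) + 1) * harmonicTerm n k := by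
  rw [harmonicTerm, harmonicTerm, Nat.add_sub_add_right, binomTerm_succ_succ, mul_assoc]

theorem harmonicTerm_eq_harmonicTerm_succ (n k : ℕ) :
    harmonicTerm n k = (((n : ℚ) + 1 - k) ^ 2 * harmonicTerm (n + 1) k
      - ((n : ℚ) + 1 - k) * binomTerm (n + 1) k) / ((n : ℚ) + 1) ^ 2 := by
  have hT := binomTerm_eq_binomTerm_succ n k
  unfold harmonicTerm
  rcases le_or_gt k n with hk | hk
  · have hH : H (n + 1 - k) = H (n - k) + 1 / ((n : ℚ) + 1 - k) := by
      rw [Nat.sub_add_comm hk, H_succ, Nat.cast_sub hk]; ring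
    have hne : (n : ℚ) + 1 - k ≠ 0 := by
      have : (k : ℚ) ≤ n := by exact_mod_cast hk
      linarith
    rw [hH, hT]
    field_simp
    ring
  · rw [binomTerm_eq_zero_of_lt hk] at hT ⊢
    rcases mul_eq_zero.mp hT.symm with h | h
    · have : (n : ℚ) + 1 - k = 0 := by
        simpa [(by positivity : (n : ℚ) + 1 ≠ 0)] using h
      simp [this]
    · simp [h]

theorem sum_three_term_eq_of_telescope (a : ℕ → ℕ → ℚ) (G : ℕ → ℚ) (α β : ℚ) (m : ℕ)
    (ha : ∀ n k, n < k → a n k = 0)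
    (htel : ∀ k, a (m + 2) k - α * a (m + 1) k + β * a m k = G (k + 1) - G k)
    (hG : G (m + 3) = 0) :
    ∑ k ∈ range (m + 3), a (m + 2) k - α * ∑ k ∈ range (m + 2), a (m + 1) k
      + β * ∑ k ∈ range (m + 1), a m k = -G 0 := by
  have extend (n : ℕ) (hn : n ≤ m + 2) :
      ∑ k ∈ range (n + 1), a n k = ∑ k ∈ range (m + 3), a n k :=
    sum_subset (range_subset_range.2 (by omega))
      fun k _ hk => ha n k (by simpa using hk)
  rw [extend (m + 1) (by omega), extend m (by omega), mul_sum, mul_sum, ← sum_sub_distrib,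
    ← sum_add_distrib, sum_congr rfl fun k _ => htel k, sum_range_sub, hG, zero_sub]

noncomputable def telescopingWeight (n k : ℕ) : ℚ :=
  k * (k ^ 2 - (2 * n - 1) * k + n * (n - 2)) / n ^ 2

noncomputable def qCertificate (n k : ℕ) : ℚ := telescopingWeight n k * binomTerm n k

theorem binomTerm_telescope (m k : ℕ) :
    binomTerm (m + 2) k - 2 * ((m : ℚ) + 2) * binomTerm (m + 1) k
      + ((m : ℚ) + 1) ^ 2 * binomTerm m k
      = qCertificate (m + 2) (k + 1) - qCertificate (m + 2) k := by
  unfold qCertificate telescopingWeight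
  rw [binomTerm_succ_succ (m + 1) k, binomTerm_eq_binomTerm_succ m k,
    binomTerm_eq_binomTerm_succ (m + 1) k]
  push_cast
  field_simp
  ring

noncomputable def pTerm (n k : ℕ) : ℚ := binomTerm n k * (2 * H (n - k) - H k)

theorem pTerm_eq (n k : ℕ) : pTerm n k = 2 * harmonicTerm n k - H k * binomTerm n k := by
  rw [pTerm, harmonicTerm]; ring

/-- Up to a multiple of `binomTerm n k`, `pTerm n k` is the `k`-derivative of
`binomTerm n k = n!² / (k! (n-k)!²)` (digamma at integers gives harmonic numbers), so this is
the `k`-derivative of `qCertificate`: the second coefficient is `∂ₖ telescopingWeight`. -/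
noncomputable def pCertificate (n k : ℕ) : ℚ :=
  telescopingWeight n k * pTerm n k
    + (3 * k ^ 2 - 2 * (2 * n - 1) * k + n * (n - 2)) / n ^ 2 * binomTerm n k

theorem pTerm_telescope (m k : ℕ) :
    pTerm (m + 2) k - 2 * ((m : ℚ) + 2) * pTerm (m + 1) k + ((m : ℚ) + 1) ^ 2 * pTerm m k
      = pCertificate (m + 2) (k + 1) - pCertificate (m + 2) k := by
  unfold pCertificate telescopingWeight
  simp only [pTerm_eq]
  -- afterwards only `binomTerm (m + 2) k`, `harmonicTerm (m + 2) k` and `H k` remain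
  rw [H_succ, harmonicTerm_succ_succ (m + 1) k, harmonicTerm_eq_harmonicTerm_succ m k,
    harmonicTerm_eq_harmonicTerm_succ (m + 1) k, binomTerm_succ_succ (m + 1) k,
    binomTerm_eq_binomTerm_succ m k, binomTerm_eq_binomTerm_succ (m + 1) k]
  push_cast
  field_simp
  ring

theorem q_eq_sum (n : ℕ) : q n = ∑ k ∈ range (n + 1), binomTerm n k := rfl

theorem p_eq_sum (n : ℕ) : p n = ∑ k ∈ range (n + 1), pTerm n k := rfl

theorem q_add_two (m : ℕ) :
    q (m + 2) = 2 * ((m : ℚ) + 2) * q (m + 1) - ((m : ℚ) + 1) ^ 2 * q m := by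
  have h := sum_three_term_eq_of_telescope binomTerm (qCertificate (m + 2)) _ _ m
    (fun _ _ => binomTerm_eq_zero_of_lt) (binomTerm_telescope m)
    (by simp [qCertificate, telescopingWeight, binomTerm_eq_zero_of_lt (show m + 2 < m + 3 by omega)])
  simp only [qCertificate, telescopingWeight, Nat.cast_zero, zero_mul, zero_div, neg_zero] at h
  simp only [q_eq_sum]
  linear_combination h

theorem p_add_two (m : ℕ) :
    p (m + 2) = 2 * ((m : ℚ) + 2) * p (m + 1) - ((m : ℚ) + 1) ^ 2 * p m - m / ((m : ℚ) + 2) := by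
  have h := sum_three_term_eq_of_telescope pTerm (pCertificate (m + 2)) _ _ m
    (fun _ _ hk => by rw [pTerm, binomTerm_eq_zero_of_lt hk, zero_mul]) (pTerm_telescope m)
    (by simp [pCertificate, telescopingWeight, pTerm, binomTerm_eq_zero_of_lt (show m + 2 < m + 3 by omega)])
  have hG : pCertificate (m + 2) 0 = m / ((m : ℚ) + 2) := by
    simp only [pCertificate, telescopingWeight, binomTerm_zero_right]
    push_cast
    field_simp
    ring
  rw [hG] at h
  simp only [p_eq_sum]
  linear_combination h

theorem dd_add_two (m : ℕ) :
    dd (m + 2) = ((m : ℚ) + 1) ^ 2 * dd (m + 1) + m / ((m : ℚ) + 2) * q (m + 1) := by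
  rw [dd, dd, q_add_two, p_add_two]
  ring

theorem add_two_mul_dd_add_two (m : ℕ) :
    ((m : ℚ) + 2) * dd (m + 2)
      = ((m : ℚ) + 2) * ((m : ℚ) + 1) * (((m : ℚ) + 1) * dd (m + 1)) + m * q (m + 1) := by
  rw [dd_add_two]
  field_simp

theorem exists_int_q_eq (n : ℕ) : ∃ z : ℤ, q n = z :=
  ⟨∑ k ∈ range (n + 1), (n.choose k : ℤ) ^ 2 * k !, by simp [q]⟩

theorem dd_one : dd 1 = -1 := by
  norm_num [dd, p, q, H, sum_range_succ]

theorem exists_int_mul_dd (n : ℕ) : ∃ z : ℤ, (n : ℚ) * dd n = z := by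
  induction n with
  | zero => exact ⟨0, by simp⟩
  | succ n ih =>
    rcases n with _ | m
    · exact ⟨-1, by simp [dd_one]⟩
    obtain ⟨z, hz⟩ := ih
    obtain ⟨Q, hQ⟩ := exists_int_q_eq (m + 1)
    refine ⟨(m + 2) * (m + 1) * z + m * Q, ?_⟩
    push_cast at hz ⊢
    rw [add_assoc, one_add_one_eq_two, add_two_mul_dd_add_two, hz, hQ]

theorem n_dd_integer_general (n : ℕ) :
    (∃ z : ℤ, (n : ℚ) * dd n = (z : ℚ)) ∧
      (Even n → ∃ z : ℤ, (n : ℚ) * dd n / 2 = (z : ℚ)) := by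
  refine ⟨exists_int_mul_dd n, ?_⟩
  rintro ⟨j, rfl⟩
  rcases j with _ | i
  · exact ⟨0, by simp⟩
  obtain ⟨z, hz⟩ := exists_int_mul_dd (2 * i + 1)
  obtain ⟨Q, hQ⟩ := exists_int_q_eq (2 * i + 1)
  refine ⟨(i + 1) * (2 * i + 1) * z + i * Q, ?_⟩
  have h := add_two_mul_dd_add_two (2 * i)
  rw [show i + 1 + (i + 1) = 2 * i + 2 by ring]
  push_cast at hz h ⊢
  rw [← hz, ← hQ]
  linear_combination h / 2

theorem n_dd_integer (n : ℕ) (hn : 1 ≤ n) :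
    (∃ z : ℤ, (n : ℚ) * dd n = (z : ℚ)) ∧
      (Even n → ∃ z : ℤ, (n : ℚ) * dd n / 2 = (z : ℚ)) :=
  n_dd_integer_general n
end
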